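/- If n ≡ 0 (mod 4), then r(n) = r(n/4), where r(n) denotes the number of representations of n as an ordered sum of three integer squares. -/

import Mathlib

/-- Number of representations of `n` as an ordered sum of three integer squares. -/
noncomputable def rThree (n : ℕ) : ℕ :=
  Nat.card {v : ℤ × ℤ × ℤ // v.1 ^ 2 + v.2.1 ^ 2 + v.2.2 ^ 2 = (n : ℤ)}

/-- An overpartition of `n`: a partition of `n` together with a set of part sizes
whose first occurrence is overlined. -/
def Overpartition (n : ℕ) : Type :=
  {ps : n.Partition × Finset ℕ // ps.2 ⊆ ps.1.parts.toFinset}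

namespace Overpartition

variable {n : ℕ}

def partition (o : Overpartition n) : n.Partition := o.1.1

def overlined (o : Overpartition n) : Finset ℕ := o.1.2

/-- The largest part. -/
def largestPart (o : Overpartition n) : ℕ := o.partition.parts.sup

/-- The number of parts. -/
def numParts (o : Overpartition n) : ℕ := Multiset.card o.partition.parts

/-- Dyson's rank: largest part minus number of parts. -/
def rank (o : Overpartition n) : ℤ := (o.largestPart : ℤ) - o.numParts

/-- The number of odd non-overlined parts. -/
def oddNonOverlined (o : Overpartition n) : ℤ :=
  ((o.partition.parts.filter Odd).card : ℤ) - ((o.overlined.filter Odd).card : ℤ)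

/-- `χ(λ) = 1` iff the largest part is odd and non-overlined. -/
def chi (o : Overpartition n) : ℤ :=
  if Odd o.largestPart ∧ o.largestPart ∉ o.overlined then 1 else 0

/-- The M2-rank: `⌈ℓ(λ)/2⌉ − n(λ) + n(λ_o) − χ(λ)`. -/
def m2Rank (o : Overpartition n) : ℤ :=
  (((o.largestPart + 1) / 2 : ℕ) : ℤ) - o.numParts + o.oddNonOverlined - o.chi

end Overpartition

/-- The number of overpartitions of `n` with even Dyson rank. -/
noncomputable def pbarE (n : ℕ) : ℕ := Nat.card {o : Overpartition n // Even o.rank}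

/-- The number of overpartitions of `n` with odd Dyson rank. -/
noncomputable def pbarO (n : ℕ) : ℕ := Nat.card {o : Overpartition n // Odd o.rank}

/-- The number of overpartitions of `n` with even M2-rank. -/
noncomputable def m2E (n : ℕ) : ℕ := Nat.card {o : Overpartition n // Even o.m2Rank}

/-- The number of overpartitions of `n` with odd M2-rank. -/
noncomputable def m2O (n : ℕ) : ℕ := Nat.card {o : Overpartition n // Odd o.m2Rank}

/-- Hook length at cell `(i,j)` of a partition given as a weakly decreasing list
of row lengths: arm + leg + 1. -/
def hookLen (l : List ℕ) (i j : ℕ) : ℕ :=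
  (l.getD i 0 - j) + (l.drop (i + 1)).countP (fun x => j < x)

/-- A partition is a `t`-core if no hook length of its Young diagram is divisible by `t`. -/
def IsCore (t : ℕ) {n : ℕ} (p : n.Partition) : Prop :=
  ∀ i < ((p.parts.sort (· ≤ ·)).reverse).length,
    ∀ j < ((p.parts.sort (· ≤ ·)).reverse).getD i 0,
      ¬ t ∣ hookLen ((p.parts.sort (· ≤ ·)).reverse) i j

/-- The number of 4-core partitions of `n`. -/
noncomputable def C4 (n : ℕ) : ℕ := Nat.card {p : n.Partition // IsCore 4 p}

def SumThreeSq (m : ℤ) : Type :=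
  {v : ℤ × ℤ × ℤ // v.1 ^ 2 + v.2.1 ^ 2 + v.2.2 ^ 2 = m}

lemma Int.sq_emod_four (x : ℤ) : x ^ 2 % 4 = if 2 ∣ x then 0 else 1 := by
  split_ifs with hx
  · obtain ⟨k, rfl⟩ := hx
    rw [show (2 * k) ^ 2 = 4 * k ^ 2 by ring, Int.mul_emod_right]
  · exact Int.sq_mod_four_eq_one_of_odd (Int.not_even_iff_odd.mp (by rwa [even_iff_two_dvd]))

/-- Squares are `0` or `1` mod `4`, so a sum of three squares divisible by `4` has no odd term. -/
lemma Int.two_dvd_of_sq_add_sq_add_sq_eq_four_mul {a b c m : ℤ}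
    (h : a ^ 2 + b ^ 2 + c ^ 2 = 4 * m) : 2 ∣ a ∧ 2 ∣ b ∧ 2 ∣ c := by
  have ha := Int.sq_emod_four a
  have hb := Int.sq_emod_four b
  have hc := Int.sq_emod_four c
  split_ifs at ha hb hc <;> first | exact ⟨‹_›, ‹_›, ‹_›⟩ | omega

def SumThreeSq.doubleEquiv (m : ℤ) : SumThreeSq m ≃ SumThreeSq (4 * m) where
  toFun v := ⟨(2 * v.1.1, 2 * v.1.2.1, 2 * v.1.2.2), by linear_combination 4 * v.2⟩
  invFun v := ⟨(v.1.1 / 2, v.1.2.1 / 2, v.1.2.2 / 2), by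
    obtain ⟨⟨a, b, c⟩, hv⟩ := v
    obtain ⟨⟨x, rfl⟩, ⟨y, rfl⟩, ⟨z, rfl⟩⟩ := Int.two_dvd_of_sq_add_sq_add_sq_eq_four_mul hv
    simp only [Int.mul_ediv_cancel_left _ two_ne_zero]
    linarith⟩
  left_inv v := Subtype.ext (by simp)
  right_inv := by
    rintro ⟨⟨a, b, c⟩, hv⟩
    obtain ⟨⟨x, rfl⟩, ⟨y, rfl⟩, ⟨z, rfl⟩⟩ := Int.two_dvd_of_sq_add_sq_add_sq_eq_four_mul hv
    simp [SumThreeSq]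

lemma rThree_four_mul (m : ℕ) : rThree (4 * m) = rThree m := by
  rw [show rThree (4 * m) = Nat.card (SumThreeSq (4 * m)) by simp [rThree, SumThreeSq]]
  exact (Nat.card_congr (SumThreeSq.doubleEquiv m)).symm

theorem rThree_div_four (n : ℕ) (h : n % 4 = 0) : rThree n = rThree (n / 4) := by
  obtain ⟨m, rfl⟩ : 4 ∣ n := Nat.dvd_of_mod_eq_zero h
  rw [Nat.mul_div_cancel_left m (by norm_num), rThree_four_mul]
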